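/- Let S be an inverse semigroup quasi-generated by a countable set, i.e., S = ⟨F ∪ E⟩ for some countable F ⊂ S where E is the set of idempotents. Then there exists a countable inverse subsemigroup T ⊆ S such that every s ∈ S is either idempotent or of the form s = te for some t ∈ T and idempotent e; in fact one may take e = s*s. -/

import Mathlib

/-!
Put `G = F ∪ star '' F` and `T = ⟨G⟩`. Since `star` is an anti-automorphism, `T` is closed under
`star`, and it is countable because `G` is. The elements of `S` that are idempotent or of the form
`t * e` with `t ∈ T` and `e` idempotent form a subsemigroup, since an idempotent can be moved to
the right past any `t` as a conjugate: `a * t = t * (star t * a * t)`. This subsemigroup contains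
`G ∪ E`, hence is all of `S`. Finally, if `s = t * e` then `star s * s = star t * t * e`, so
`t * (star s * s) = t * e = s`.
-/

theorem Set.Countable.subsemigroupClosure {M : Type*} [Semigroup M] {s : Set M}
    (hs : s.Countable) : (Subsemigroup.closure s : Set M).Countable := by
  have := hs.to_subtype
  have : Countable (FreeSemigroup s) := FreeSemigroup.toFreeMonoid_injective.countable
  refine (Set.countable_range (FreeSemigroup.lift ((↑) : s → M))).mono ?_
  rw [← MulHom.coe_srange]
  exact Subsemigroup.closure_le.2 fun x hx => ⟨FreeSemigroup.of ⟨x, hx⟩, FreeSemigroup.lift_of _ _⟩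

section Semigroup

variable {S : Type*} [Semigroup S]

lemma isIdempotentElem_mul_of_mul_mul_eq {s x : S} (h : s * x * s = s) :
    IsIdempotentElem (s * x) := by
  rw [IsIdempotentElem, ← mul_assoc, h]

lemma isIdempotentElem_mul_of_mul_mul_eq' {s x : S} (h : s * x * s = s) :
    IsIdempotentElem (x * s) := by
  rw [IsIdempotentElem, mul_assoc, ← mul_assoc s, h]

lemma eq_of_inverses (hcomm : ∀ e f : S, IsIdempotentElem e → IsIdempotentElem f → Commute e f)
    {s x y : S} (hx₁ : s * x * s = s) (hx₂ : x * s * x = x)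
    (hy₁ : s * y * s = s) (hy₂ : y * s * y = y) : x = y := by
  have hx : x = y * s * x :=
    calc x = x * (s * y * s) * x := by rw [hy₁, hx₂]
      _ = (x * s) * (y * s) * x := by simp only [mul_assoc]
      _ = (y * s) * (x * s) * x := by
        rw [(hcomm _ _ (isIdempotentElem_mul_of_mul_mul_eq hx₂)
          (isIdempotentElem_mul_of_mul_mul_eq hy₂)).eq]
      _ = y * s * x := by simp only [mul_assoc]; rw [← mul_assoc x, hx₂]
  have hy : y = y * s * x :=
    calc y = y * (s * x * s) * y := by rw [hx₁, hy₂]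
      _ = y * ((s * x) * (s * y)) := by simp only [mul_assoc]
      _ = y * ((s * y) * (s * x)) := by
        rw [(hcomm _ _ (isIdempotentElem_mul_of_mul_mul_eq' hx₂)
          (isIdempotentElem_mul_of_mul_mul_eq' hy₂)).eq]
      _ = y * s * x := by simp only [← mul_assoc]; rw [hy₂]
  rw [hx, ← hy]

/-- These axioms say exactly that `S` is an inverse semigroup with inversion `star`. -/
structure IsInverseStar (star : S → S) : Prop where
  mul_star_mul : ∀ s : S, s * star s * s = s
  star_mul_star : ∀ s : S, star s * s * star s = star s
  commute_of_isIdempotentElem :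
    ∀ e f : S, IsIdempotentElem e → IsIdempotentElem f → Commute e f

namespace IsInverseStar

variable {star : S → S}

lemma star_mul (h : IsInverseStar star) (a b : S) : star (a * b) = star b * star a := by
  have ha := isIdempotentElem_mul_of_mul_mul_eq' (h.mul_star_mul a)
  have hb := isIdempotentElem_mul_of_mul_mul_eq (h.mul_star_mul b)
  refine eq_of_inverses h.commute_of_isIdempotentElem (h.mul_star_mul _) (h.star_mul_star _) ?_ ?_
  · calc a * b * (star b * star a) * (a * b)
        = a * ((b * star b) * (star a * a)) * b := by simp only [mul_assoc]
      _ = a * ((star a * a) * (b * star b)) * b := by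
        rw [(h.commute_of_isIdempotentElem _ _ hb ha).eq]
      _ = (a * star a * a) * (b * star b * b) := by simp only [mul_assoc]
      _ = a * b := by rw [h.mul_star_mul, h.mul_star_mul]
  · calc star b * star a * (a * b) * (star b * star a)
        = star b * ((star a * a) * (b * star b)) * star a := by simp only [mul_assoc]
      _ = star b * ((b * star b) * (star a * a)) * star a := by
        rw [(h.commute_of_isIdempotentElem _ _ ha hb).eq]
      _ = (star b * b * star b) * (star a * a * star a) := by simp only [mul_assoc]
      _ = star b * star a := by rw [h.star_mul_star, h.star_mul_star]

lemma star_star (h : IsInverseStar star) (s : S) : star (star s) = s :=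
  eq_of_inverses h.commute_of_isIdempotentElem (h.mul_star_mul (star s))
    (h.star_mul_star (star s)) (h.star_mul_star s) (h.mul_star_mul s)

lemma star_eq_self_of_isIdempotentElem (h : IsInverseStar star) {e : S}
    (he : IsIdempotentElem e) : star e = e := by
  have hee : e * e * e = e := by rw [he.eq, he.eq]
  exact eq_of_inverses h.commute_of_isIdempotentElem (h.mul_star_mul e) (h.star_mul_star e) hee hee

lemma isIdempotentElem_star_mul_mul (h : IsInverseStar star) (t : S) {a : S}
    (ha : IsIdempotentElem a) : IsIdempotentElem (star t * a * t) := by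
  have htt := isIdempotentElem_mul_of_mul_mul_eq (h.mul_star_mul t)
  calc (star t * a * t) * (star t * a * t)
      = star t * (a * (t * star t)) * (a * t) := by simp only [mul_assoc]
    _ = star t * ((t * star t) * a) * (a * t) := by
      rw [(h.commute_of_isIdempotentElem _ _ ha htt).eq]
    _ = (star t * t * star t) * ((a * a) * t) := by simp only [mul_assoc]
    _ = star t * a * t := by rw [h.star_mul_star, ha.eq, mul_assoc]

lemma mul_star_mul_mul (h : IsInverseStar star) (t : S) {a : S} (ha : IsIdempotentElem a) :
    t * (star t * a * t) = a * t := by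
  have htt := isIdempotentElem_mul_of_mul_mul_eq (h.mul_star_mul t)
  calc t * (star t * a * t) = ((t * star t) * a) * t := by simp only [mul_assoc]
    _ = (a * (t * star t)) * t := by rw [(h.commute_of_isIdempotentElem _ _ htt ha).eq]
    _ = a * t := by rw [mul_assoc, h.mul_star_mul]

lemma mul_eq_mul_star_mul_self (h : IsInverseStar star) (t : S) {e : S}
    (he : IsIdempotentElem e) : t * e = t * (star (t * e) * (t * e)) := by
  have htt := isIdempotentElem_mul_of_mul_mul_eq' (h.mul_star_mul t)
  rw [h.star_mul, h.star_eq_self_of_isIdempotentElem he]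
  calc t * e = (t * star t * t) * (e * e) := by rw [h.mul_star_mul, he.eq]
    _ = t * ((star t * t) * e * e) := by simp only [mul_assoc]
    _ = t * (e * (star t * t) * e) := by rw [(h.commute_of_isIdempotentElem _ _ htt he).eq]
    _ = t * (e * star t * (t * e)) := by simp only [mul_assoc]

lemma star_mem_closure (h : IsInverseStar star) {G : Set S} (hG : ∀ g ∈ G, star g ∈ G) {a : S}
    (ha : a ∈ Subsemigroup.closure G) : star a ∈ Subsemigroup.closure G := by
  induction ha using Subsemigroup.closure_induction with
  | mem g hg => exact Subsemigroup.subset_closure (hG g hg)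
  | mul a b _ _ iha ihb => exact h.star_mul a b ▸ Subsemigroup.mul_mem _ ihb iha

lemma isIdempotentElem_or_exists_mul_of_mem_closure (h : IsInverseStar star) (T : Subsemigroup S)
    {s : S} (hs : s ∈ Subsemigroup.closure ((T : Set S) ∪ {e | IsIdempotentElem e})) :
    IsIdempotentElem s ∨ ∃ t ∈ T, ∃ e, IsIdempotentElem e ∧ s = t * e := by
  have hcomm := h.commute_of_isIdempotentElem
  induction hs using Subsemigroup.closure_induction with
  | mem x hx =>
    rcases hx with hx | hx
    · exact Or.inr ⟨x, hx, star x * x, isIdempotentElem_mul_of_mul_mul_eq' (h.mul_star_mul x),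
        by rw [← mul_assoc, h.mul_star_mul]⟩
    · exact Or.inl hx
  | mul a b _ _ iha ihb =>
    rcases ihb with hb | ⟨u, hu, f, hf, rfl⟩
    · rcases iha with ha | ⟨t, ht, e, he, rfl⟩
      · exact Or.inl (ha.mul_of_commute (hcomm _ _ ha hb) hb)
      · exact Or.inr ⟨t, ht, e * b, he.mul_of_commute (hcomm _ _ he hb) hb, mul_assoc _ _ _⟩
    have hmove : ∀ {a}, IsIdempotentElem a →
        IsIdempotentElem (star u * a * u * f) ∧ a * (u * f) = u * (star u * a * u * f) :=
      fun {a} ha => ⟨(h.isIdempotentElem_star_mul_mul u ha).mul_of_commute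
          (hcomm _ _ (h.isIdempotentElem_star_mul_mul u ha) hf) hf,
        by rw [← mul_assoc, ← h.mul_star_mul_mul u ha, mul_assoc]⟩
    rcases iha with ha | ⟨t, ht, e, he, rfl⟩
    · exact Or.inr ⟨u, hu, _, (hmove ha).1, (hmove ha).2⟩
    · refine Or.inr ⟨t * u, T.mul_mem ht hu, _, (hmove he).1, ?_⟩
      rw [mul_assoc, (hmove he).2]
      simp only [mul_assoc]

end IsInverseStar

end Semigroup

/-- If `S` is quasi-generated by a countable set, there is a countable inverse
subsemigroup `T` such that every element is idempotent or of the form `t·(s*s)`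
with `t ∈ T`. -/
theorem stmt_12 {S : Type*} [Semigroup S] (star : S → S)
    (hinv : ∀ s : S, s * star s * s = s)
    (hinv2 : ∀ s : S, star s * s * star s = star s)
    (hcomm : ∀ e f : S, e * e = e → f * f = f → e * f = f * e)
    (hqc : ∃ F : Set S, F.Countable ∧
      Subsemigroup.closure (F ∪ star '' F ∪ {e : S | e * e = e}) = ⊤) :
    ∃ T : Set S, T.Countable ∧ (∀ a ∈ T, ∀ b ∈ T, a * b ∈ T) ∧
      (∀ a ∈ T, star a ∈ T) ∧
      ∀ s : S, s * s = s ∨ ∃ t ∈ T, s = t * (star s * s) := by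
  obtain ⟨F, hFc, htop⟩ := hqc
  have h : IsInverseStar star := ⟨hinv, hinv2, hcomm⟩
  set T := Subsemigroup.closure (F ∪ star '' F)
  have hG : ∀ g ∈ F ∪ star '' F, star g ∈ F ∪ star '' F := by
    rintro g (hg | ⟨f, hf, rfl⟩)
    · exact Or.inr ⟨g, hg, rfl⟩
    · exact Or.inl (by rwa [h.star_star])
  refine ⟨T, (hFc.union (hFc.image star)).subsemigroupClosure, fun a ha b hb => T.mul_mem ha hb,
    fun a ha => h.star_mem_closure hG ha, fun s => ?_⟩
  have hs : s ∈ Subsemigroup.closure ((T : Set S) ∪ {e | IsIdempotentElem e}) :=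
    Subsemigroup.closure_mono (Set.union_subset_union_left _ Subsemigroup.subset_closure)
      (htop ▸ Subsemigroup.mem_top s)
  rcases h.isIdempotentElem_or_exists_mul_of_mem_closure T hs with hs | ⟨t, ht, e, he, rfl⟩
  · exact Or.inl hs
  · exact Or.inr ⟨t, ht, h.mul_eq_mul_star_mul_self t he⟩
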